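/- Let w_1, w_2 > 0 satisfy (3/4)w_2 < w_1 < w_2, and define α*_1 = (−4w_1 + 3w_2 + 2√(w_1(4w_1−3w_2)))/(3w_2) and α*_2 = (2w_1 − √(w_1(4w_1−3w_2)))/(3w_2). Then α*_1 < α*_2. -/
import Mathlib

/-- Two-round durable-good revenue
`G̃(α₁,α₂) = α₁(1−α₁)w₁ + α₂(1−(α₁+α₂))w₂(1−α₁)` (initial stock `y₀ = 1`). -/
noncomputable def twoRoundRevenue (w₁ w₂ a₁ a₂ : ℝ) : ℝ :=
  a₁ * (1 - a₁) * w₁ + a₂ * (1 - (a₁ + a₂)) * w₂ * (1 - a₁)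

/-- The interior critical first-round share
`α₁* = (−4w₁ + 3w₂ + 2√(w₁(4w₁−3w₂)))/(3w₂)`. -/
noncomputable def alpha1Star (w₁ w₂ : ℝ) : ℝ :=
  (-4 * w₁ + 3 * w₂ + 2 * Real.sqrt (w₁ * (4 * w₁ - 3 * w₂))) / (3 * w₂)

/-- The interior critical second-round share
`α₂* = (2w₁ − √(w₁(4w₁−3w₂)))/(3w₂)`. -/
noncomputable def alpha2Star (w₁ w₂ : ℝ) : ℝ :=
  (2 * w₁ - Real.sqrt (w₁ * (4 * w₁ - 3 * w₂))) / (3 * w₂)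

/-- `N = 2` example: ordering of the critical shares.
With modest growth, `(3/4)w₂ < w₁ < w₂`, the first-round share is smaller
than the second-round share. -/
theorem two_round_share_ordering
    (w₁ w₂ : ℝ) (h₁ : 0 < w₁) (h₂ : 0 < w₂)
    (hlow : 3 / 4 * w₂ < w₁) (hhigh : w₁ < w₂) :
    alpha1Star w₁ w₂ < alpha2Star w₁ w₂ := by
  unfold alpha1Star alpha2Star
  have hy : (0:ℝ) < 2 * w₁ - w₂ := by linarith
  have hs : Real.sqrt (w₁ * (4 * w₁ - 3 * w₂)) < 2 * w₁ - w₂ := by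
    rw [show (2 * w₁ - w₂) = Real.sqrt ((2 * w₁ - w₂)^2) from
      (Real.sqrt_sq hy.le).symm]
    apply Real.sqrt_lt_sqrt (by nlinarith)
    nlinarith
  rw [div_lt_div_iff₀ (by linarith) (by linarith)]
  nlinarith [hs]
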